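/- (The infimum price characterization of the convex hull price.) Let G > 0, n ≥ 1, and for each i ∈ {1,…,n} let fᵢ : ℝ → ℝ be convex on [0,G] and Lipschitz on [0,G]. Fix a demand level y with 0 < y ≤ n·G, and define p' = inf { p ∈ ℝ : ∑ᵢ sup Dᵢ(p) ≥ y }. Then this infimum exists (the set is nonempty and bounded below) and p' supports y: there exist z₁,…,zₙ with zᵢ ∈ Dᵢ(p') for each i and ∑ᵢ zᵢ = y. -/

import Mathlib

/-!
Each demand set `Dᵢ(p)` is a compact interval (convexity of `fᵢ`), is monotone in `p`, and has a
closed graph. Hence `p ↦ sup Dᵢ(p)` is monotone and both its one-sided limits at `p'` lie in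
`Dᵢ(p')`. Prices just above `p'` have total maximal demand `≥ y` and prices below `p'` have it
`< y`, so the right limits give points of `Dᵢ(p')` summing to at least `y` and the left limits
points summing to at most `y`. The Minkowski sum of the intervals `Dᵢ(p')` is convex, so it
contains `y`. The Lipschitz bounds `K` make the total maximal demand `n G` above `K` and `0` below
`-K`, so the infimum exists.
-/

open Set Filter Topology
open scoped Pointwise

def demandSet (f : ℝ → ℝ) (G p : ℝ) : Set ℝ :=
  {z ∈ Set.Icc (0 : ℝ) G | ∀ w ∈ Set.Icc (0 : ℝ) G, p * z - f z ≥ p * w - f w}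

section Demand

variable {f : ℝ → ℝ} {G p : ℝ}

lemma demandSet_nonempty (hG : 0 ≤ G) (hf : ContinuousOn f (Icc 0 G)) (p : ℝ) :
    (demandSet f G p).Nonempty := by
  obtain ⟨z, hz, hmax⟩ := isCompact_Icc.exists_isMaxOn (nonempty_Icc.2 hG)
    ((continuousOn_const.mul continuousOn_id).sub hf)
  exact ⟨z, hz, fun w hw => hmax hw⟩

lemma mem_demandSet_of_tendsto {α : Type*} {l : Filter α} [l.NeBot] {P Z : α → ℝ} {z : ℝ}
    (hf : ContinuousOn f (Icc 0 G)) (hP : Tendsto P l (𝓝 p)) (hZ : Tendsto Z l (𝓝 z))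
    (hmem : ∀ᶠ a in l, Z a ∈ demandSet f G (P a)) : z ∈ demandSet f G p := by
  have hIcc : ∀ᶠ a in l, Z a ∈ Icc 0 G := hmem.mono fun _ h => h.1
  have hz : z ∈ Icc 0 G := isClosed_Icc.mem_of_tendsto hZ hIcc
  have hfZ : Tendsto (fun a => f (Z a)) l (𝓝 (f z)) :=
    (hf z hz).tendsto.comp (tendsto_nhdsWithin_iff.2 ⟨hZ, hIcc⟩)
  refine ⟨hz, fun w hw => ?_⟩
  exact le_of_tendsto_of_tendsto ((hP.mul_const w).sub_const (f w)) ((hP.mul hZ).sub hfZ)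
    (hmem.mono fun a h => h.2 w hw)

lemma isClosed_demandSet (hf : ContinuousOn f (Icc 0 G)) (p : ℝ) :
    IsClosed (demandSet f G p) := by
  refine isClosed_of_closure_subset fun z hz => ?_
  have := mem_closure_iff_nhdsWithin_neBot.1 hz
  exact mem_demandSet_of_tendsto hf tendsto_const_nhds
    (tendsto_nhdsWithin_of_tendsto_nhds tendsto_id) eventually_mem_nhdsWithin

lemma isCompact_demandSet (hf : ContinuousOn f (Icc 0 G)) (p : ℝ) :
    IsCompact (demandSet f G p) :=
  isCompact_Icc.of_isClosed_subset (isClosed_demandSet hf p) fun _ hz => hz.1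

lemma sSup_mem_demandSet (hG : 0 ≤ G) (hf : ContinuousOn f (Icc 0 G)) (p : ℝ) :
    sSup (demandSet f G p) ∈ demandSet f G p :=
  (isCompact_demandSet hf p).sSup_mem (demandSet_nonempty hG hf p)

lemma mem_demandSet_of_tendsto_sSup (hG : 0 ≤ G) (hf : ContinuousOn f (Icc 0 G))
    {l : Filter ℝ} [l.NeBot] (hl : l ≤ 𝓝 p) {z : ℝ}
    (h : Tendsto (fun q => sSup (demandSet f G q)) l (𝓝 z)) : z ∈ demandSet f G p :=
  mem_demandSet_of_tendsto hf (tendsto_id'.2 hl) h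
    (Eventually.of_forall fun q => sSup_mem_demandSet hG hf q)

/-- Adding the two optimality conditions gives `(q - p) (w - z) ≥ 0`. -/
lemma le_of_mem_demandSet_of_lt {q z w : ℝ} (hpq : p < q) (hz : z ∈ demandSet f G p)
    (hw : w ∈ demandSet f G q) : z ≤ w := by
  nlinarith [hz.2 w hw.1, hw.2 z hz.1]

lemma monotone_sSup_demandSet (hG : 0 ≤ G) (hf : ContinuousOn f (Icc 0 G)) :
    Monotone fun p => sSup (demandSet f G p) := by
  intro p q hpq
  rcases hpq.eq_or_lt with rfl | hlt
  · exact le_rfl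
  · exact le_of_mem_demandSet_of_lt hlt (sSup_mem_demandSet hG hf p)
      (sSup_mem_demandSet hG hf q)

lemma convex_demandSet (hconv : ConvexOn ℝ (Icc 0 G) f) (p : ℝ) :
    Convex ℝ (demandSet f G p) := by
  intro z hz w hw a b ha hb hab
  refine ⟨convex_Icc 0 G hz.1 hw.1 ha hb hab, fun u hu => ?_⟩
  have hf := hconv.2 hz.1 hw.1 ha hb hab
  have hsplit : p * u - f u = a * (p * u - f u) + b * (p * u - f u) := by
    rw [← add_mul, hab, one_mul]
  simp only [smul_eq_mul] at hf ⊢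
  nlinarith [mul_le_mul_of_nonneg_left (hz.2 u hu) ha, mul_le_mul_of_nonneg_left (hw.2 u hu) hb]

lemma sSup_demandSet_of_le {K : NNReal} (hK : LipschitzOnWith K f (Icc 0 G)) (hG : 0 ≤ G)
    (hp : K ≤ p) : sSup (demandSet f G p) = G := by
  have hGmem : G ∈ demandSet f G p := by
    refine ⟨right_mem_Icc.2 hG, fun w hw => ?_⟩
    have hd := hK.dist_le_mul w hw G (right_mem_Icc.2 hG)
    rw [Real.dist_eq, Real.dist_eq, abs_sub_comm w, abs_of_nonneg (sub_nonneg.2 hw.2)] at hd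
    have hKp : (K : ℝ) * (G - w) ≤ p * (G - w) := by gcongr; linarith [hw.2]
    linarith [neg_abs_le (f w - f G)]
  exact le_antisymm (csSup_le ⟨G, hGmem⟩ fun z hz => hz.1.2)
    (le_csSup ⟨G, fun z hz => hz.1.2⟩ hGmem)

lemma sSup_demandSet_of_lt_neg {K : NNReal} (hK : LipschitzOnWith K f (Icc 0 G)) (hG : 0 ≤ G)
    (hp : p < -K) : sSup (demandSet f G p) = 0 := by
  have hzero : ∀ z ∈ demandSet f G p, z = 0 := by
    intro z hz
    have h0 : (0 : ℝ) ∈ Icc 0 G := left_mem_Icc.2 hG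
    have hd := hK.dist_le_mul z hz.1 0 h0
    rw [Real.dist_eq, Real.dist_eq, sub_zero, abs_of_nonneg hz.1.1] at hd
    nlinarith [neg_abs_le (f z - f 0), hz.2 0 h0, hz.1.1]
  obtain ⟨z, hz⟩ := demandSet_nonempty hG hK.continuousOn p
  have hsingle : demandSet f G p = {0} :=
    eq_singleton_iff_unique_mem.2 ⟨hzero z hz ▸ hz, hzero⟩
  rw [hsingle, csSup_singleton]

end Demand

section Aggregate

variable {ι : Type*} [Fintype ι] {f : ι → ℝ → ℝ} {G y : ℝ}

noncomputable def maxTotalDemand (f : ι → ℝ → ℝ) (G p : ℝ) : ℝ :=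
  ∑ i, sSup (demandSet (f i) G p)

lemma monotone_maxTotalDemand (hG : 0 ≤ G) (hf : ∀ i, ContinuousOn (f i) (Icc 0 G)) :
    Monotone (maxTotalDemand f G) :=
  fun _ _ hpq => Finset.sum_le_sum fun i _ => monotone_sSup_demandSet hG (hf i) hpq

lemma exists_mem_demandSet_le_sum (hG : 0 ≤ G) (hf : ∀ i, ContinuousOn (f i) (Icc 0 G))
    (hne : {p | y ≤ maxTotalDemand f G p}.Nonempty) :
    ∃ b : ι → ℝ, (∀ i, b i ∈ demandSet (f i) G (sInf {p | y ≤ maxTotalDemand f G p})) ∧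
      y ≤ ∑ i, b i := by
  set p' := sInf {p | y ≤ maxTotalDemand f G p}
  have hlim i := (monotone_sSup_demandSet hG (hf i)).tendsto_nhdsGT p'
  refine ⟨_, fun i => mem_demandSet_of_tendsto_sSup hG (hf i) nhdsWithin_le_nhds (hlim i), ?_⟩
  refine ge_of_tendsto (tendsto_finsetSum _ fun i _ => hlim i) ?_
  filter_upwards [eventually_mem_nhdsWithin] with q hq
  obtain ⟨r, hr, hrq⟩ := exists_lt_of_csInf_lt hne hq
  exact hr.trans (monotone_maxTotalDemand hG hf hrq.le)

lemma exists_mem_demandSet_sum_le (hG : 0 ≤ G) (hf : ∀ i, ContinuousOn (f i) (Icc 0 G))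
    (hbdd : BddBelow {p | y ≤ maxTotalDemand f G p}) :
    ∃ a : ι → ℝ, (∀ i, a i ∈ demandSet (f i) G (sInf {p | y ≤ maxTotalDemand f G p})) ∧
      ∑ i, a i ≤ y := by
  set p' := sInf {p | y ≤ maxTotalDemand f G p}
  have hlim i := (monotone_sSup_demandSet hG (hf i)).tendsto_nhdsLT p'
  refine ⟨_, fun i => mem_demandSet_of_tendsto_sSup hG (hf i) nhdsWithin_le_nhds (hlim i), ?_⟩
  refine le_of_tendsto (tendsto_finsetSum _ fun i _ => hlim i) ?_
  filter_upwards [eventually_mem_nhdsWithin] with q hq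
  exact (not_le.1 (notMem_of_lt_csInf (s := {p | y ≤ maxTotalDemand f G p}) hq hbdd)).le

end Aggregate

lemma exists_sum_eq_of_convex {𝕜 ι : Type*} [Field 𝕜] [LinearOrder 𝕜] [IsStrictOrderedRing 𝕜]
    [Fintype ι] {s : ι → Set 𝕜} (hs : ∀ i, Convex 𝕜 (s i)) {a b : ι → 𝕜}
    (ha : ∀ i, a i ∈ s i) (hb : ∀ i, b i ∈ s i) {y : 𝕜} (hay : ∑ i, a i ≤ y)
    (hyb : y ≤ ∑ i, b i) : ∃ z : ι → 𝕜, (∀ i, z i ∈ s i) ∧ ∑ i, z i = y := by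
  have hconv : Convex 𝕜 (∑ i, s i) := convex_sum _ fun i _ => hs i
  have hy : y ∈ ∑ i, s i := hconv.ordConnected.out
    (finsetSum_mem_finsetSum _ _ _ fun i _ => ha i)
    (finsetSum_mem_finsetSum _ _ _ fun i _ => hb i) ⟨hay, hyb⟩
  obtain ⟨z, hz, hsum⟩ := (mem_fintype_sum _ _).1 hy
  exact ⟨z, hz, hsum⟩

theorem inf_price_supports_general (G : ℝ) (hG : 0 < G) (n : ℕ)
    (f : Fin n → ℝ → ℝ)
    (hconv : ∀ i, ConvexOn ℝ (Set.Icc (0 : ℝ) G) (f i))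
    (hlip : ∀ i, ∃ K : NNReal, LipschitzOnWith K (f i) (Set.Icc (0 : ℝ) G))
    (y : ℝ) (hy0 : 0 < y) (hyn : y ≤ n * G) :
    ({p : ℝ | y ≤ ∑ i, sSup (demandSet (f i) G p)}).Nonempty ∧
    BddBelow {p : ℝ | y ≤ ∑ i, sSup (demandSet (f i) G p)} ∧
    ∃ z : Fin n → ℝ,
      (∀ i, z i ∈ demandSet (f i) G (sInf {p : ℝ | y ≤ ∑ i, sSup (demandSet (f i) G p)})) ∧
      ∑ i, z i = y := by
  obtain ⟨K, hK⟩ : ∃ K : NNReal, ∀ i, LipschitzOnWith K (f i) (Icc 0 G) := by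
    choose K hK using hlip
    exact ⟨∑ j, K j, fun i =>
      (hK i).weaken (Finset.single_le_sum (fun j _ => bot_le) (Finset.mem_univ i))⟩
  have hf i := (hK i).continuousOn
  have hne : {p | y ≤ maxTotalDemand f G p}.Nonempty := by
    have htop i := sSup_demandSet_of_le (hK i) hG.le le_rfl
    exact ⟨K, by simpa [maxTotalDemand, htop] using hyn⟩
  have hbdd : BddBelow {p | y ≤ maxTotalDemand f G p} := by
    refine ⟨-K, fun p hp => not_lt.1 fun hlt => hy0.not_ge ?_⟩
    have hbot i := sSup_demandSet_of_lt_neg (hK i) hG.le hlt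
    simpa [maxTotalDemand, hbot] using hp
  obtain ⟨a, ha, hay⟩ := exists_mem_demandSet_sum_le hG.le hf hbdd
  obtain ⟨b, hb, hyb⟩ := exists_mem_demandSet_le_sum hG.le hf hne
  exact ⟨hne, hbdd,
    exists_sum_eq_of_convex (fun i => convex_demandSet (hconv i) _) ha hb hay hyb⟩

/-- the infimum price `p' = inf {p : ∑ᵢ sup Dᵢ(p) ≥ y}` is well defined
(the set is nonempty and bounded below) and supports the demand `y`. -/
theorem inf_price_supports (G : ℝ) (hG : 0 < G) (n : ℕ) (hn : 1 ≤ n)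
    (f : Fin n → ℝ → ℝ)
    (hconv : ∀ i, ConvexOn ℝ (Set.Icc (0 : ℝ) G) (f i))
    (hlip : ∀ i, ∃ K : NNReal, LipschitzOnWith K (f i) (Set.Icc (0 : ℝ) G))
    (y : ℝ) (hy0 : 0 < y) (hyn : y ≤ n * G) :
    ({p : ℝ | y ≤ ∑ i, sSup (demandSet (f i) G p)}).Nonempty ∧
    BddBelow {p : ℝ | y ≤ ∑ i, sSup (demandSet (f i) G p)} ∧
    ∃ z : Fin n → ℝ,
      (∀ i, z i ∈ demandSet (f i) G (sInf {p : ℝ | y ≤ ∑ i, sSup (demandSet (f i) G p)})) ∧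
      ∑ i, z i = y :=
  inf_price_supports_general G hG n f hconv hlip y hy0 hyn
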